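/- Let ρ be an n×n positive semidefinite matrix with trace 1 whose diagonal entries all satisfy |ρᵢᵢ − 1/n| ≤ ε²/n for some ε ∈ (0,1). Define σ by σᵢⱼ = ρᵢⱼ/(n·√(ρᵢᵢ·ρⱼⱼ)). Then σ is positive semidefinite with all diagonal entries equal to 1/n, and ‖ρ − σ‖_tr ≤ 3ε. -/

import Mathlib

/-!
Write `ρ = X Xᵀ` and `σ = Y Yᵀ` with `Y = D X`, `D = diag (√(1/n) / √ρᵢᵢ)`. If `(vᵢ)` is an
orthonormal eigenbasis of `ρ - σ`, the `i`-th eigenvalue is `‖Xᵀ vᵢ‖² - ‖Yᵀ vᵢ‖²`, whose absolute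
value is at most `‖(X - Y)ᵀ vᵢ‖ (‖Xᵀ vᵢ‖ + ‖Yᵀ vᵢ‖)`. Summing and applying Cauchy–Schwarz gives
`‖X Xᵀ - Y Yᵀ‖_tr ≤ ‖X - Y‖_F (‖X‖_F + ‖Y‖_F)`. Here `‖X‖_F² = tr ρ = 1 = tr σ = ‖Y‖_F²` and
`‖X - Y‖_F² = ∑ᵢ (√ρᵢᵢ - √(1/n))² ≤ ε⁴`, so `‖ρ - σ‖_tr ≤ 2ε² ≤ 3ε`.
-/

open Matrix

/-- Trace (Schatten-1) norm of a real matrix: trace of the psd square root of AᵀA. -/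
noncomputable def traceNorm {m k : Type*} [Fintype m] [Fintype k] [DecidableEq k]
    (A : Matrix m k ℝ) : ℝ :=
  ((((Matrix.posSemidef_conjTranspose_mul_self A).1.eigenvectorUnitary : Matrix k k ℝ) *
    diagonal (Real.sqrt ∘ (Matrix.posSemidef_conjTranspose_mul_self A).1.eigenvalues) *
    (star (Matrix.posSemidef_conjTranspose_mul_self A).1.eigenvectorUnitary : Matrix k k ℝ))).trace

lemma abs_norm_sq_sub_norm_sq_le {E : Type*} [SeminormedAddCommGroup E] (a b : E) :
    |‖a‖ ^ 2 - ‖b‖ ^ 2| ≤ ‖a - b‖ * (‖a‖ + ‖b‖) := by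
  have h := add_nonneg (norm_nonneg a) (norm_nonneg b)
  rw [sq_sub_sq, abs_mul, abs_of_nonneg h, mul_comm]
  exact mul_le_mul_of_nonneg_right (abs_norm_sub_norm_le a b) h

lemma dotProduct_mul_transpose_mulVec {n k : Type*} [Fintype n] [Fintype k]
    (M : Matrix n k ℝ) (w : n → ℝ) :
    w ⬝ᵥ ((M * Mᵀ) *ᵥ w) = ‖WithLp.toLp 2 (Mᵀ *ᵥ w)‖ ^ 2 := by
  rw [← mulVec_mulVec, dotProduct_mulVec, ← mulVec_transpose, EuclideanSpace.real_norm_sq_eq]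
  simp [dotProduct, sq]

lemma isHermitian_mul_transpose_self {n k : Type*} [Fintype k] (M : Matrix n k ℝ) :
    (M * Mᵀ).IsHermitian := by
  simpa using isHermitian_mul_conjTranspose_self M

section TraceNorm

variable {n k : Type*} [Fintype n] [DecidableEq n] [Fintype k]

lemma traceNorm_eq_trace_cfc_sqrt {m : Type*} [Fintype m] [DecidableEq k] (A : Matrix m k ℝ) :
    traceNorm A = (cfc Real.sqrt (Aᴴ * A)).trace := by
  rw [(posSemidef_conjTranspose_mul_self A).1.cfc_eq, IsHermitian.cfc,
    Unitary.conjStarAlgAut_apply]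
  rfl

lemma Matrix.IsHermitian.trace_cfc {𝕜 : Type*} [RCLike 𝕜] {A : Matrix n n 𝕜}
    (hA : A.IsHermitian) (f : ℝ → ℝ) :
    (cfc f A).trace = ∑ i, (f (hA.eigenvalues i) : 𝕜) := by
  rw [hA.cfc_eq, IsHermitian.cfc, Unitary.conjStarAlgAut_apply, trace_mul_cycle,
    Unitary.coe_star_mul_self, one_mul, trace_diagonal]
  rfl

lemma Matrix.IsHermitian.traceNorm_eq_sum_abs_eigenvalues {A : Matrix n n ℝ}
    (hA : A.IsHermitian) : traceNorm A = ∑ i, |hA.eigenvalues i| :=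
  calc traceNorm A = (cfc Real.sqrt (A ^ 2)).trace := by
        rw [traceNorm_eq_trace_cfc_sqrt, hA.eq, sq]
    _ = (cfc (fun x => √(x ^ 2)) A).trace :=
        congr_arg trace (cfc_comp_pow Real.sqrt 2 A (ha := hA)).symm
    _ = ∑ i, |hA.eigenvalues i| := by
        simp only [hA.trace_cfc, Real.sqrt_sq_eq_abs]
        rfl

lemma Matrix.IsHermitian.eigenvalues_eq_dotProduct {A : Matrix n n ℝ} (hA : A.IsHermitian)
    (i : n) : hA.eigenvalues i = ⇑(hA.eigenvectorBasis i) ⬝ᵥ (A *ᵥ ⇑(hA.eigenvectorBasis i)) := by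
  simp [hA.eigenvalues_eq i]

lemma OrthonormalBasis.sum_dotProduct_mulVec {ι : Type*} [Fintype ι]
    (b : OrthonormalBasis ι ℝ (EuclideanSpace ℝ n)) (B : Matrix n n ℝ) :
    ∑ i, ⇑(b i) ⬝ᵥ (B *ᵥ ⇑(b i)) = B.trace := by
  rw [← trace_toLin_eq B (EuclideanSpace.basisFun n ℝ).toBasis, LinearMap.trace_eq_sum_inner _ b]
  congr 1 with i
  rw [← toEuclideanLin_eq_toLin_orthonormal, EuclideanSpace.inner_eq_star_dotProduct]
  simp [dotProduct_comm]

theorem traceNorm_mul_transpose_sub_mul_transpose_le (X Y : Matrix n k ℝ) :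
    traceNorm (X * Xᵀ - Y * Yᵀ) ≤
      √((X - Y) * (X - Y)ᵀ).trace * (√(X * Xᵀ).trace + √(Y * Yᵀ).trace) := by
  have hA := (isHermitian_mul_transpose_self X).sub (isHermitian_mul_transpose_self Y)
  set v := hA.eigenvectorBasis
  set len : Matrix n k ℝ → n → ℝ := fun M i => ‖WithLp.toLp 2 (Mᵀ *ᵥ ⇑(v i))‖
  have sum_len_sq (M : Matrix n k ℝ) : ∑ i, len M i ^ 2 = (M * Mᵀ).trace := by
    simp only [len, ← dotProduct_mul_transpose_mulVec]
    exact v.sum_dotProduct_mulVec _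
  have abs_eigenvalue_le (i : n) : |hA.eigenvalues i| ≤ len (X - Y) i * (len X i + len Y i) := by
    rw [hA.eigenvalues_eq_dotProduct, sub_mulVec, dotProduct_sub,
      dotProduct_mul_transpose_mulVec, dotProduct_mul_transpose_mulVec]
    simpa only [len, transpose_sub, sub_mulVec, WithLp.toLp_sub] using
      abs_norm_sq_sub_norm_sq_le (WithLp.toLp 2 (Xᵀ *ᵥ ⇑(v i))) (WithLp.toLp 2 (Yᵀ *ᵥ ⇑(v i)))
  calc traceNorm (X * Xᵀ - Y * Yᵀ) = ∑ i, |hA.eigenvalues i| :=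
        hA.traceNorm_eq_sum_abs_eigenvalues
    _ ≤ ∑ i, len (X - Y) i * len X i + ∑ i, len (X - Y) i * len Y i := by
        rw [← Finset.sum_add_distrib]
        exact Finset.sum_le_sum fun i _ => (abs_eigenvalue_le i).trans_eq (mul_add _ _ _)
    _ ≤ √(∑ i, len (X - Y) i ^ 2) * √(∑ i, len X i ^ 2) +
          √(∑ i, len (X - Y) i ^ 2) * √(∑ i, len Y i ^ 2) :=
        add_le_add (Real.sum_mul_le_sqrt_mul_sqrt _ _ _) (Real.sum_mul_le_sqrt_mul_sqrt _ _ _)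
    _ = _ := by rw [sum_len_sq, sum_len_sq, sum_len_sq, mul_add]

end TraceNorm

lemma sq_one_sub_sqrt_div_sqrt_mul_le {r c : ℝ} (hr : 0 < r) (hc : 0 < c) :
    (1 - √c / √r) ^ 2 * r ≤ (r - c) ^ 2 / c := by
  have hr' := Real.sq_sqrt hr.le
  have h_eq : (1 - √c / √r) ^ 2 * r = (√r - √c) ^ 2 := by
    rw [one_sub_div (Real.sqrt_pos.mpr hr).ne', div_pow, hr', div_mul_cancel₀ _ hr.ne']
  have h_sq : (√r - √c) ^ 2 * (√r + √c) ^ 2 = (r - c) ^ 2 := by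
    rw [← mul_pow, mul_comm, ← sq_sub_sq, hr', Real.sq_sqrt hc.le]
  rw [h_eq, le_div_iff₀ hc, ← h_sq]
  gcongr
  nlinarith [mul_nonneg (Real.sqrt_nonneg r) (Real.sqrt_nonneg c), Real.sq_sqrt hc.le]

section Rescaling

variable {n k : Type*} [Fintype n] [DecidableEq n] [Fintype k]

open scoped MatrixOrder in
lemma Matrix.PosSemidef.exists_eq_mul_transpose {ρ : Matrix n n ℝ} (hρ : ρ.PosSemidef) :
    ∃ X : Matrix n n ℝ, ρ = X * Xᵀ := by
  simpa [star_eq_conjTranspose] using CStarAlgebra.nonneg_iff_eq_mul_star_self.mp hρ.nonneg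

lemma diagonal_mul_mul_transpose (d : n → ℝ) (X : Matrix n k ℝ) :
    (diagonal d * X) * (diagonal d * X)ᵀ = diagonal d * (X * Xᵀ) * diagonal d := by
  rw [transpose_mul, diagonal_transpose, Matrix.mul_assoc, Matrix.mul_assoc, Matrix.mul_assoc]

lemma trace_diagonal_mul_mul_diagonal (d : n → ℝ) (A : Matrix n n ℝ) :
    (diagonal d * A * diagonal d).trace = ∑ i, d i ^ 2 * A i i := by
  simp only [trace, diag, mul_diagonal, diagonal_mul]
  congr 1 with i
  ring

lemma of_div_mul_sqrt_eq_diagonal_mul_mul_diagonal {ρ : Matrix n n ℝ} (hpos : ∀ i, 0 < ρ i i)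
    {c : ℝ} (hc : 0 < c) :
    of (fun i j => ρ i j / (c * √(ρ i i * ρ j j))) =
      diagonal (fun i => √(1 / c) / √(ρ i i)) * ρ * diagonal (fun i => √(1 / c) / √(ρ i i)) := by
  ext i j
  have := Real.sqrt_pos.mpr (hpos i)
  have := Real.sqrt_pos.mpr (hpos j)
  rw [of_apply, mul_diagonal, diagonal_mul, Real.sqrt_mul (hpos i).le]
  field_simp
  rw [Real.sq_sqrt (by positivity)]
  field_simp

lemma trace_sub_diagonal_mul_mul_transpose_le {ρ : Matrix n n ℝ} {X : Matrix n k ℝ}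
    (hX : ρ = X * Xᵀ) (hpos : ∀ i, 0 < ρ i i) {c δ : ℝ} (hc : 0 < c)
    (hdiag : ∀ i, |ρ i i - c| ≤ δ) :
    ((X - diagonal (fun i => √c / √(ρ i i)) * X) *
        (X - diagonal (fun i => √c / √(ρ i i)) * X)ᵀ).trace ≤ Fintype.card n * (δ ^ 2 / c) := by
  have h_sub : X - diagonal (fun i => √c / √(ρ i i)) * X =
      diagonal (fun i => 1 - √c / √(ρ i i)) * X := by
    ext i j
    simp [diagonal_mul, sub_mul]
  rw [h_sub, diagonal_mul_mul_transpose, ← hX, trace_diagonal_mul_mul_diagonal, ← nsmul_eq_mul,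
    ← Finset.card_univ, ← Finset.sum_const]
  refine Finset.sum_le_sum fun i _ => (sq_one_sub_sqrt_div_sqrt_mul_le (hpos i) hc).trans ?_
  obtain ⟨hlow, hupp⟩ := abs_le.mp (hdiag i)
  exact div_le_div_of_nonneg_right (sq_le_sq' hlow hupp) hc.le

end Rescaling

/-- if ρ is a density matrix with |ρᵢᵢ − 1/n| ≤ ε²/n for all i, then
σᵢⱼ = ρᵢⱼ/(n√(ρᵢᵢρⱼⱼ)) is psd with diagonal entries 1/n and ‖ρ − σ‖_tr ≤ 3ε. -/
theorem rescaled_state_close {n : ℕ} (hn : 0 < n) (ε : ℝ) (hε : 0 < ε) (hε1 : ε < 1)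
    (ρ : Matrix (Fin n) (Fin n) ℝ) (hρ : ρ.PosSemidef) (htr : ρ.trace = 1)
    (hdiag : ∀ i, |ρ i i - 1 / n| ≤ ε ^ 2 / n)
    (σ : Matrix (Fin n) (Fin n) ℝ)
    (hσ : σ = Matrix.of fun i j => ρ i j / (n * Real.sqrt (ρ i i * ρ j j))) :
    σ.PosSemidef ∧ (∀ i, σ i i = 1 / n) ∧ traceNorm (ρ - σ) ≤ 3 * ε := by
  have hn' : (0 : ℝ) < n := Nat.cast_pos.mpr hn
  have hpos (i : Fin n) : 0 < ρ i i := by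
    have := (abs_le.mp (hdiag i)).1
    have : ε ^ 2 / n < 1 / n := div_lt_div_of_pos_right (by nlinarith) hn'
    linarith
  set D := diagonal fun i => √(1 / n) / √(ρ i i)
  have hσ_eq : σ = D * ρ * D := hσ.trans (of_div_mul_sqrt_eq_diagonal_mul_mul_diagonal hpos hn')
  have hσ_diag (i : Fin n) : σ i i = 1 / n := by
    rw [hσ, of_apply, Real.sqrt_mul_self (hpos i).le]
    field_simp [(hpos i).ne']
  have hσ_trace : σ.trace = 1 := by simp [trace, hσ_diag, hn'.ne']
  refine ⟨hσ_eq ▸ by simpa [D] using hρ.mul_mul_conjTranspose_same D, hσ_diag, ?_⟩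
  obtain ⟨X, hX⟩ := hρ.exists_eq_mul_transpose
  have hσX : σ = (D * X) * (D * X)ᵀ := by rw [diagonal_mul_mul_transpose, ← hX, hσ_eq]
  have h_defect : ((X - D * X) * (X - D * X)ᵀ).trace ≤ ε ^ 4 := by
    refine (trace_sub_diagonal_mul_mul_transpose_le hX hpos (one_div_pos.mpr hn') hdiag).trans_eq ?_
    rw [Fintype.card_fin]
    field_simp
  calc traceNorm (ρ - σ) ≤ √(ε ^ 4) * (√1 + √1) := by
        rw [hX, hσX]
        refine (traceNorm_mul_transpose_sub_mul_transpose_le _ _).trans ?_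
        rw [← hX, ← hσX, htr, hσ_trace]
        gcongr
    _ ≤ 3 * ε := by
        rw [show ε ^ 4 = (ε ^ 2) ^ 2 by ring, Real.sqrt_sq (by positivity), Real.sqrt_one]
        nlinarith
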